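/- Suppose β is nonresonant, suppose ℓ_i = 1 for every i ∈ {1,…,k}, and let v ∈ E'_β be such that v_i is a nonnegative integer for every i ∈ {1,…,k}. Then the following are equivalent: (i) for every subset T ⊆ {1,…,n} whose complement in {1,…,n} has at most k−1 elements, every integer z with T-nsupp(v + z·ℓ) = T-nsupp(v) satisfies z ≥ 0; (ii) v_i = 0 for every i ∈ {1,…,k}. (Lemma 9.4, determining when the coefficients of powers of log x_0 contain only nonnegative powers of x_0.) -/

import Mathlib

/-!
For `j ≥ k` the coordinate `v j` is never an integer: otherwise `v` would be integral at some
`i < k` and at `j`, and subtracting those integers from `β = ∑ v μ • a μ` would put a point of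
`β + ℤA` into the span of the remaining `a μ`, against nonresonance. If `v i = b > 0` for some
`i < k`, then on `T = {i} ∪ {k, …, n-1}` neither `v` nor `v - ℓ` has a negative integer entry,
so `z = -1` violates (i). Conversely, if `v` vanishes on `{0, …, k-1}`, every admissible `T`
meets that set in some `i`, and `(v + zℓ)_i = z` is a negative integer whenever `z < 0`.
-/

open Finset

/-- The paper's `T-nsupp(w)`. -/
def negIntSupport {ι R : Type*} [IntCast R] (T : Finset ι) (w : ι → R) : Set ι :=
  {μ | μ ∈ T ∧ ∃ m : ℤ, m < 0 ∧ w μ = m}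

theorem negIntSupport_eq_empty {ι R : Type*} [IntCast R] {T : Finset ι} {w : ι → R}
    (h : ∀ μ ∈ T, ∀ m : ℤ, m < 0 → w μ ≠ m) : negIntSupport T w = ∅ :=
  Set.eq_empty_of_forall_notMem fun _ ⟨hμ, m, hm, hw⟩ => h _ hμ m hm hw

section Nonresonance

variable {ι R M : Type*} [Fintype ι] [Ring R] [AddCommGroup M] [Module R M]

theorem exists_sum_smul_add_intCast_mem_span (a : ι → M) (v : ι → R) (S : Set ι)
    (hint : ∀ μ ∉ S, ∃ m : ℤ, v μ = m) :
    ∃ c : ι → ℤ, ∑ μ, v μ • a μ + ∑ μ, (c μ : R) • a μ ∈ Submodule.span R (a '' S) := by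
  classical
  choose! w hw using hint
  refine ⟨fun μ => if μ ∈ S then 0 else -w μ, ?_⟩
  rw [← sum_add_distrib]
  refine Submodule.sum_mem _ fun μ _ => ?_
  by_cases hμ : μ ∈ S
  · simpa [hμ] using
      Submodule.smul_mem _ (v μ) (Submodule.subset_span (Set.mem_image_of_mem a hμ))
  · simp [hμ, hw μ hμ]

theorem ne_intCast_of_forall_notMem_span (a : ι → M) (v : ι → R) {i j : ι}
    (hnr : ∀ c : ι → ℤ, ∑ μ, v μ • a μ + ∑ μ, (c μ : R) • a μ ∉
      Submodule.span R (a '' {μ | μ ≠ i ∧ μ ≠ j}))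
    (hi : ∃ m : ℤ, v i = m) (m : ℤ) : v j ≠ m := by
  intro hj
  obtain ⟨c, hc⟩ := exists_sum_smul_add_intCast_mem_span a v {μ | μ ≠ i ∧ μ ≠ j} fun μ hμ => by
    rcases not_and_or.mp hμ with h | h
    · exact not_not.mp h ▸ hi
    · exact ⟨m, not_not.mp h ▸ hj⟩
  exact hnr c hc

end Nonresonance

section NegIntSupport

variable {ι R : Type*} [Ring R] [CharZero R] {T : Finset ι} {v : ι → R} {ℓ : ι → ℤ} {i : ι}

theorem nonneg_of_negIntSupport_eq {z : ℤ} (hiT : i ∈ T) (hvi : v i = 0) (hℓi : ℓ i = 1)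
    (h : negIntSupport T (fun μ => v μ + ((z * ℓ μ : ℤ) : R)) = negIntSupport T v) : 0 ≤ z := by
  by_contra! hz
  have hi : i ∈ negIntSupport T (fun μ => v μ + ((z * ℓ μ : ℤ) : R)) :=
    ⟨hiT, z, hz, by simp [hvi, hℓi]⟩
  obtain ⟨-, m, hm, hvm⟩ := h ▸ hi
  rw [hvi, eq_comm, Int.cast_eq_zero] at hvm
  omega

theorem negIntSupport_neg_eq_of_natCast {b : ℕ} (hb : b ≠ 0) (hvi : v i = b) (hℓi : ℓ i = 1)
    (hT : ∀ μ ∈ T, μ ≠ i → ∀ m : ℤ, v μ ≠ m) :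
    negIntSupport T (fun μ => v μ + ((-1 * ℓ μ : ℤ) : R)) = negIntSupport T v := by
  rw [negIntSupport_eq_empty, negIntSupport_eq_empty]
  · intro μ hμ m hm hvm
    obtain rfl | hμi := eq_or_ne μ i
    · rw [hvi] at hvm
      have : (b : ℤ) = m := mod_cast hvm
      omega
    · exact hT μ hμ hμi m hvm
  · intro μ hμ m hm hvm
    obtain rfl | hμi := eq_or_ne μ i
    · rw [hvi, hℓi] at hvm
      have : (b : ℤ) - 1 = m := by exact_mod_cast hvm
      omega
    · exact hT μ hμ hμi (m + ℓ μ) (by rw [Int.cast_add, ← hvm]; simp)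

end NegIntSupport

section FinPrefix

variable {n k : ℕ}

theorem exists_lt_mem_of_card_compl_le (hk : 1 ≤ k) (hkn : k ≤ n) {T : Finset (Fin n)}
    (hT : #Tᶜ ≤ k - 1) : ∃ i : Fin n, (i : ℕ) < k ∧ i ∈ T := by
  obtain ⟨i, hi, hiT⟩ := exists_mem_notMem_of_card_lt_card (s := Tᶜ)
    (t := {i : Fin n | (i : ℕ) < k}) (by rw [Fin.card_filter_val_lt]; omega)
  exact ⟨i, by simpa using hi, by simpa using hiT⟩

theorem card_compl_filter_lt_imp_eq (hkn : k ≤ n) {i : Fin n} (hi : (i : ℕ) < k) :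
    #({μ : Fin n | (μ : ℕ) < k → μ = i} : Finset (Fin n))ᶜ = k - 1 := by
  have : ({μ : Fin n | (μ : ℕ) < k → μ = i} : Finset (Fin n))ᶜ =
      ({μ : Fin n | (μ : ℕ) < k} : Finset (Fin n)).erase i := by
    ext μ; simp [and_comm]
  rw [this, card_erase_of_mem (by simpa using hi), Fin.card_filter_val_lt, min_eq_right hkn]

end FinPrefix

theorem stmt_19_general (d n k : ℕ) (hk1 : 1 ≤ k) (hkn : k ≤ n)
    (ℓ : Fin n → ℤ)
    (ℓs : Fin n → ℤ) (hℓs : ∀ μ : Fin n, ℓs μ = if (μ : ℕ) < k then ℓ μ else -ℓ μ)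
    (aC : Fin n → Fin d → ℂ)
    (E E' : (Fin d → ℂ) → Set (Fin n → ℂ))
    (hE : ∀ (γ : Fin d → ℂ) (v : Fin n → ℂ), v ∈ E γ ↔
      (∑ μ, v μ • aC μ) = γ ∧
        ∃ i : Fin n, (i : ℕ) < k ∧ ∃ b : ℕ, (b : ℤ) < ℓ i ∧ v i = (b : ℂ))
    (hE' : ∀ (γ : Fin d → ℂ) (v : Fin n → ℂ), v ∈ E' γ ↔
      v ∈ E γ ∧ ∀ i : Fin n, (i : ℕ) < k → ∀ m : ℤ, m < 0 → v i ≠ (m : ℂ))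
    (β : Fin d → ℂ)
    (hnr : ∀ i j : Fin n, (i : ℕ) < k → k ≤ (j : ℕ) → ∀ c : Fin n → ℤ,
      β + ∑ μ, (c μ : ℂ) • aC μ ∉
        Submodule.span ℂ (aC '' {μ : Fin n | μ ≠ i ∧ μ ≠ j}))
    (hℓ1 : ∀ i : Fin n, (i : ℕ) < k → ℓ i = 1)
    (v : Fin n → ℂ) (hv : v ∈ E' β)
    (hvint : ∀ i : Fin n, (i : ℕ) < k → ∃ b : ℕ, v i = (b : ℂ)) :
    (∀ T : Finset (Fin n), Tᶜ.card ≤ k - 1 →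
        ∀ z : ℤ,
          ({μ : Fin n | μ ∈ T ∧ ∃ m : ℤ, m < 0 ∧ v μ + ((z * ℓs μ : ℤ) : ℂ) = (m : ℂ)} =
            {μ : Fin n | μ ∈ T ∧ ∃ m : ℤ, m < 0 ∧ v μ = (m : ℂ)}) → 0 ≤ z) ↔
      (∀ i : Fin n, (i : ℕ) < k → v i = 0) := by
  have hsum : ∑ μ, v μ • aC μ = β := ((hE β v).mp ((hE' β v).mp hv).1).1
  have hnonint : ∀ j : Fin n, k ≤ (j : ℕ) → ∀ m : ℤ, v j ≠ m := fun j hj =>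
    ne_intCast_of_forall_notMem_span aC v (hsum ▸ hnr ⟨0, by omega⟩ j hk1 hj)
      (by obtain ⟨b, hb⟩ := hvint ⟨0, by omega⟩ hk1; exact ⟨b, mod_cast hb⟩)
  have hℓs1 : ∀ i : Fin n, (i : ℕ) < k → ℓs i = 1 := fun i hi => by
    rw [hℓs, if_pos hi, hℓ1 i hi]
  constructor
  · intro H i hi
    obtain ⟨b, hvi⟩ := hvint i hi
    rw [hvi, Nat.cast_eq_zero]
    by_contra hb
    have hT := card_compl_filter_lt_imp_eq hkn hi
    refine absurd (H _ hT.le (-1) ?_) (by omega)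
    refine negIntSupport_neg_eq_of_natCast hb hvi (hℓs1 i hi) fun μ hμ hμi => hnonint μ ?_
    simp only [mem_filter, mem_univ, true_and] at hμ
    exact not_lt.mp fun h => hμi (hμ h)
  · intro hv0 T hT z hsupp
    obtain ⟨i, hi, hiT⟩ := exists_lt_mem_of_card_compl_le hk1 hkn hT
    exact nonneg_of_negIntSupport_eq hiT (hv0 i hi) (hℓs1 i hi) hsupp

/-- Lemma 9.4: with ℓ_i = 1 for i ≤ k and v ∈ E'_β having v_i ∈ ℤ_{≥0} for all i ≤ k, the sets ℤ_{v,T}(0,0) are all contained in ℤ_{≥0} (over T with complement of size ≤ k−1) iff v_i = 0 for all i ≤ k. -/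
theorem stmt_19 (d n k : ℕ) (hd : 1 ≤ d) (hn : 2 ≤ n) (hk1 : 1 ≤ k) (hkn : k ≤ n)
    (a : Fin n → Fin d → ℤ)
    (aR : Fin n → Fin d → ℝ) (haR : ∀ μ i, aR μ i = (a μ i : ℝ))
    (hdim : Module.finrank ℝ (Submodule.span ℝ (Set.range aR)) = n - 1)
    (hindep : ∀ μ₀ : Fin n,
      LinearIndependent ℝ (fun ν : {ν : Fin n // ν ≠ μ₀} => aR ν.1))
    (ℓ : Fin n → ℤ) (hℓpos : ∀ μ, 0 < ℓ μ)
    (ℓs : Fin n → ℤ) (hℓs : ∀ μ : Fin n, ℓs μ = if (μ : ℕ) < k then ℓ μ else -ℓ μ)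
    (hlat : ∀ l : Fin n → ℤ, (∑ μ, l μ • a μ) = 0 ↔ ∃ z : ℤ, l = z • ℓs)
    (aC : Fin n → Fin d → ℂ) (haC : ∀ μ i, aC μ i = (a μ i : ℂ))
    (E E' : (Fin d → ℂ) → Set (Fin n → ℂ))
    (hE : ∀ (γ : Fin d → ℂ) (v : Fin n → ℂ), v ∈ E γ ↔
      (∑ μ, v μ • aC μ) = γ ∧
        ∃ i : Fin n, (i : ℕ) < k ∧ ∃ b : ℕ, (b : ℤ) < ℓ i ∧ v i = (b : ℂ))
    (hE' : ∀ (γ : Fin d → ℂ) (v : Fin n → ℂ), v ∈ E' γ ↔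
      v ∈ E γ ∧ ∀ i : Fin n, (i : ℕ) < k → ∀ m : ℤ, m < 0 → v i ≠ (m : ℂ))
    (β : Fin d → ℂ) (hβ : β ∈ Submodule.span ℂ (Set.range aC))
    (hnr : ∀ i j : Fin n, (i : ℕ) < k → k ≤ (j : ℕ) → ∀ c : Fin n → ℤ,
      β + ∑ μ, (c μ : ℂ) • aC μ ∉
        Submodule.span ℂ (aC '' {μ : Fin n | μ ≠ i ∧ μ ≠ j}))
    (hℓ1 : ∀ i : Fin n, (i : ℕ) < k → ℓ i = 1)
    (v : Fin n → ℂ) (hv : v ∈ E' β)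
    (hvint : ∀ i : Fin n, (i : ℕ) < k → ∃ b : ℕ, v i = (b : ℂ)) :
    (∀ T : Finset (Fin n), Tᶜ.card ≤ k - 1 →
        ∀ z : ℤ,
          ({μ : Fin n | μ ∈ T ∧ ∃ m : ℤ, m < 0 ∧ v μ + ((z * ℓs μ : ℤ) : ℂ) = (m : ℂ)} =
            {μ : Fin n | μ ∈ T ∧ ∃ m : ℤ, m < 0 ∧ v μ = (m : ℂ)}) → 0 ≤ z) ↔
      (∀ i : Fin n, (i : ℕ) < k → v i = 0) :=
  stmt_19_general d n k hk1 hkn ℓ ℓs hℓs aC E E' hE hE' β hnr hℓ1 v hv hvint
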